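/- Let S = {1,…,N}, and for i ∈ S let I_i := [2i, 2i+1] ⊂ ℝ (pairwise disjoint intervals of Lebesgue measure 1). Let p_{ij} : ℝ^d × ℝ^d → [0,∞) be measurable, and let ρ₀(·,i), ρ_T(·,j) : ℝ^d → [0,∞) be densities with supports contained in compact sets A₀^i and A_T^j respectively. Define on ℝ^{d+1} (writing 𝐱 = (x, x_{d+1}) with x ∈ ℝ^d, x_{d+1} ∈ ℝ): ρ̃₀(𝐱) := ρ₀(x,i) if x_{d+1} ∈ I_i for some (unique) i and 0 otherwise; ρ̃_T(𝐲) := ρ_T(y,j) if y_{d+1} ∈ I_j and 0 otherwise; p̃(𝐱,𝐲) := p_{ij}(x,y) if x_{d+1} ∈ I_i and y_{d+1} ∈ I_j, and 0 otherwise; Ã₀ := ∪_{i∈S} A₀^i × I_i and Ã_T := ∪_{j∈S} A_T^j × I_j. Suppose φ⁰, φᵀ, φ̂⁰, φ̂ᵀ : ℝ^d × S → [0,∞) solve the multi-regime Schrödinger system: φ⁰(x,i) = ∑_j ∫ p_{ij}(x,y) φᵀ(y,j) dy and φ̂ᵀ(y,j) = ∑_i ∫ p_{ij}(x,y) φ̂⁰(x,i)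 dx for all x,y,i,j, with ρ₀(x,i) = φ⁰(x,i)φ̂⁰(x,i), ρ_T(y,j) = φᵀ(y,j)φ̂ᵀ(y,j) for all x,y,i,j, and with φᵀ(·,j) = 0 off A_T^j and φ̂⁰(·,i) = 0 off A₀^i. Define Φ⁰(𝐱) := φ⁰(x,i) for x_{d+1} ∈ I_i, Φᵀ(𝐲) := φᵀ(y,j) for y_{d+1} ∈ I_j, and Φ̂⁰, Φ̂ᵀ analogously. Then (Φ⁰, Φᵀ, Φ̂⁰, Φ̂ᵀ) solves the augmented system on ℝ^{d+1}: Φ⁰(𝐱) = ∫_{Ã_T} p̃(𝐱,𝐲) Φᵀ(𝐲) d𝐲 for every 𝐱 ∈ Ã₀; Φ̂ᵀ(𝐲) = ∫_{Ã₀} p̃(𝐱,𝐲) Φ̂⁰(𝐱) d𝐱 for every 𝐲 ∈ Ã_T; ρ̃₀(𝐱) = Φ⁰(𝐱) Φ̂⁰(𝐱) for 𝐱 ∈ Ã₀; and ρ̃_T(𝐲) = Φᵀ(𝐲) Φ̂ᵀ(𝐲) for 𝐲 ∈ Ã_T. -/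
import Mathlib


open MeasureTheory
open scoped ENNReal

/-- ℝ^d -/
abbrev Euc (d : ℕ) := EuclideanSpace ℝ (Fin d)

/-- The unit interval I_i := [2i, 2i+1] ⊂ ℝ encoding regime i. -/
def Iseg (i : ℕ) : Set ℝ := Set.Icc (2 * (i : ℝ)) (2 * (i : ℝ) + 1)

/-- Lift of a function on ℝ^d × S to ℝ^d × ℝ, equal to h(x,i) when the auxiliary
coordinate lies in I_i, and 0 if it lies in no I_i. -/
noncomputable def liftFun {d N : ℕ} (h : Euc d → Fin N → ℝ≥0∞) :
    Euc d × ℝ → ℝ≥0∞ :=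
  fun q => ∑ i : Fin N, Set.indicator (Iseg (i : ℕ)) (fun _ => h q.1 i) q.2

/-- Lift of the transition densities: p̃(xx,yy) = p_{ij}(x,y) when x_{d+1} ∈ I_i and
y_{d+1} ∈ I_j, and 0 otherwise. -/
noncomputable def liftKer {d N : ℕ}
    (p : Fin N → Fin N → Euc d → Euc d → ℝ≥0∞) :
    Euc d × ℝ → Euc d × ℝ → ℝ≥0∞ :=
  fun q r => ∑ i : Fin N, ∑ j : Fin N,
    Set.indicator (Iseg (i : ℕ))
      (fun _ => Set.indicator (Iseg (j : ℕ)) (fun _ => p i j q.1 r.1) r.2) q.2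

lemma Iseg_eq_of_mem {i j : ℕ} {t : ℝ} (hi : t ∈ Iseg i) (hj : t ∈ Iseg j) : i = j := by
  by_contra h
  rcases Nat.lt_or_ge i j with hlt | hge
  · have : (i : ℝ) + 1 ≤ j := by exact_mod_cast hlt
    have := hi.2; have := hj.1; simp only [Iseg, Set.mem_Icc] at hi hj; linarith [hi.2, hj.1]
  · have hlt : j < i := lt_of_le_of_ne hge (fun h' => h h'.symm)
    have : (j : ℝ) + 1 ≤ i := by exact_mod_cast hlt
    simp only [Iseg, Set.mem_Icc] at hi hj; linarith [hj.2, hi.1]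

lemma sum_indicator_eval {N : ℕ} (a : Fin N → ℝ≥0∞) {i : Fin N} {t : ℝ} (ht : t ∈ Iseg i) :
    ∑ j : Fin N, Set.indicator (Iseg (j : ℕ)) (fun _ => a j) t = a i := by
  rw [Finset.sum_eq_single_of_mem i (Finset.mem_univ i)]
  · exact Set.indicator_of_mem ht _
  · intro j _ hj
    refine Set.indicator_of_notMem (fun hmem => hj ?_) _
    exact Fin.ext (Iseg_eq_of_mem hmem ht)

lemma sum_indicator_mul {N : ℕ} (a b : Fin N → ℝ≥0∞) (t : ℝ) :
    (∑ j : Fin N, Set.indicator (Iseg (j : ℕ)) (fun _ => a j) t) *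
      (∑ j : Fin N, Set.indicator (Iseg (j : ℕ)) (fun _ => b j) t) =
    ∑ j : Fin N, Set.indicator (Iseg (j : ℕ)) (fun _ => a j * b j) t := by
  by_cases h : ∃ i : Fin N, t ∈ Iseg (i : ℕ)
  · obtain ⟨i, hi⟩ := h
    rw [sum_indicator_eval a hi, sum_indicator_eval b hi, sum_indicator_eval (fun j => a j * b j) hi]
  · push_neg at h
    rw [Finset.sum_eq_zero (fun j _ => Set.indicator_of_notMem (h j) _),
      Finset.sum_eq_zero (fun j _ => Set.indicator_of_notMem (h j) _), zero_mul]
    exact (Finset.sum_eq_zero fun j _ => Set.indicator_of_notMem (h j) _).symm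

lemma liftFun_eval {d N : ℕ} (h : Euc d → Fin N → ℝ≥0∞) {i : Fin N} {q : Euc d × ℝ}
    (hq : q.2 ∈ Iseg (i : ℕ)) : liftFun h q = h q.1 i :=
  sum_indicator_eval _ hq

lemma liftKer_eval_left {d N : ℕ} (p : Fin N → Fin N → Euc d → Euc d → ℝ≥0∞)
    {i : Fin N} {q : Euc d × ℝ} (hq : q.2 ∈ Iseg (i : ℕ)) (r : Euc d × ℝ) :
    liftKer p q r =
      ∑ j : Fin N, Set.indicator (Iseg (j : ℕ)) (fun _ => p i j q.1 r.1) r.2 := by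
  unfold liftKer
  rw [Finset.sum_eq_single_of_mem i (Finset.mem_univ i)]
  · exact Finset.sum_congr rfl fun j _ => Set.indicator_of_mem hq _
  · intro i' _ hi'
    refine Finset.sum_eq_zero fun j _ => Set.indicator_of_notMem (fun hmem => hi' ?_) _
    exact Fin.ext (Iseg_eq_of_mem hmem hq)

lemma liftKer_eval_right {d N : ℕ} (p : Fin N → Fin N → Euc d → Euc d → ℝ≥0∞)
    {j : Fin N} (q : Euc d × ℝ) {r : Euc d × ℝ} (hr : r.2 ∈ Iseg (j : ℕ)) :
    liftKer p q r =
      ∑ i : Fin N, Set.indicator (Iseg (i : ℕ)) (fun _ => p i j q.1 r.1) q.2 := by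
  unfold liftKer
  refine Finset.sum_congr rfl fun i _ => ?_
  by_cases h : q.2 ∈ Iseg (i : ℕ)
  · simp only [Set.indicator_of_mem h]
    exact sum_indicator_eval _ hr
  · simp only [Set.indicator_of_notMem h]
    simp

lemma Iseg_measurableSet (n : ℕ) : MeasurableSet (Iseg n) :=
  measurableSet_Icc

lemma Iseg_volume (i : ℕ) : volume (Iseg i) = 1 := by
  simp [Iseg, Real.volume_Icc]

/-- The key integral computation: integrating a "lifted" sum over the product space
collapses the auxiliary coordinate. -/
lemma lintegral_sum_indicator {d N : ℕ} (q : Fin N → Euc d → ℝ≥0∞)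
    (hq : ∀ j, Measurable (q j)) :
    ∫⁻ yy : Euc d × ℝ, (∑ j : Fin N, Set.indicator (Iseg (j : ℕ)) (fun _ => q j yy.1) yy.2)
      ∂volume = ∑ j : Fin N, ∫⁻ y, q j y ∂volume := by
  have hmeas : ∀ j : Fin N, Measurable fun yy : Euc d × ℝ =>
      Set.indicator (Iseg (j : ℕ)) (fun _ => q j yy.1) yy.2 := by
    intro j
    have : (fun yy : Euc d × ℝ => Set.indicator (Iseg (j : ℕ)) (fun _ => q j yy.1) yy.2)
        = Set.indicator (Prod.snd ⁻¹' Iseg (j : ℕ)) (fun yy : Euc d × ℝ => q j yy.1) := by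
      funext yy
      by_cases h : yy.2 ∈ Iseg (j : ℕ)
      · rw [Set.indicator_of_mem h, Set.indicator_of_mem (by exact h)]
      · rw [Set.indicator_of_notMem h, Set.indicator_of_notMem (by exact h)]
    rw [this]
    exact ((hq j).comp measurable_fst).indicator
      (measurable_snd (Iseg_measurableSet _))
  have hF : Measurable fun yy : Euc d × ℝ =>
      ∑ j : Fin N, Set.indicator (Iseg (j : ℕ)) (fun _ => q j yy.1) yy.2 :=
    Finset.measurable_sum _ fun j _ => hmeas j
  rw [MeasureTheory.Measure.volume_eq_prod, MeasureTheory.lintegral_prod _ hF.aemeasurable]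
  have inner : ∀ y : Euc d,
      (∫⁻ t : ℝ, ∑ j : Fin N, Set.indicator (Iseg (j : ℕ)) (fun _ => q j y) t ∂volume)
        = ∑ j : Fin N, q j y := by
    intro y
    rw [MeasureTheory.lintegral_finset_sum _
      (fun j _ => (measurable_const.indicator (Iseg_measurableSet _)))]
    refine Finset.sum_congr rfl fun j _ => ?_
    rw [lintegral_indicator_const (Iseg_measurableSet _) _, Iseg_volume, mul_one]
  simp only [inner]
  exact MeasureTheory.lintegral_finset_sum _ fun j _ => hq j

/-- embedding of the multi-regime Schrödinger system on ℝ^d × S into a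
single Schrödinger system on ℝ^{d+1} = ℝ^d × ℝ, encoding the regime in an auxiliary
coordinate. -/
theorem sinkhorn_embedding
    {d N : ℕ}
    (p : Fin N → Fin N → Euc d → Euc d → ℝ≥0∞)
    (hp_meas : ∀ i j, Measurable fun a : Euc d × Euc d => p i j a.1 a.2)
    (ρ0 ρT : Euc d → Fin N → ℝ≥0∞)
    (A0 AT : Fin N → Set (Euc d))
    (hA0 : ∀ i, IsCompact (A0 i)) (hAT : ∀ j, IsCompact (AT j))
    (hρ0_supp : ∀ i x, x ∉ A0 i → ρ0 x i = 0)
    (hρT_supp : ∀ j y, y ∉ AT j → ρT y j = 0)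
    (φ0 φT φhat0 φhatT : Euc d → Fin N → ℝ≥0∞)
    (hφT_meas : ∀ j, Measurable fun y => φT y j)
    (hφhat0_meas : ∀ i, Measurable fun x => φhat0 x i)
    -- the multi-regime Schrödinger system
    (h1 : ∀ (x : Euc d) (i : Fin N),
      φ0 x i = ∑ j, ∫⁻ y, p i j x y * φT y j ∂volume)
    (h2 : ∀ (y : Euc d) (j : Fin N),
      φhatT y j = ∑ i, ∫⁻ x, p i j x y * φhat0 x i ∂volume)
    (h3 : ∀ (x : Euc d) (i : Fin N), ρ0 x i = φ0 x i * φhat0 x i)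
    (h4 : ∀ (y : Euc d) (j : Fin N), ρT y j = φT y j * φhatT y j)
    -- support conditions
    (hφT_supp : ∀ j y, y ∉ AT j → φT y j = 0)
    (hφhat0_supp : ∀ i x, x ∉ A0 i → φhat0 x i = 0) :
    -- the augmented system on ℝ^{d+1}
    (∀ xx ∈ ⋃ i, (A0 i) ×ˢ Iseg (i : ℕ),
      liftFun φ0 xx =
        ∫⁻ yy in ⋃ j, (AT j) ×ˢ Iseg (j : ℕ),
          liftKer p xx yy * liftFun φT yy ∂volume) ∧
    (∀ yy ∈ ⋃ j, (AT j) ×ˢ Iseg (j : ℕ),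
      liftFun φhatT yy =
        ∫⁻ xx in ⋃ i, (A0 i) ×ˢ Iseg (i : ℕ),
          liftKer p xx yy * liftFun φhat0 xx ∂volume) ∧
    (∀ xx ∈ ⋃ i, (A0 i) ×ˢ Iseg (i : ℕ),
      liftFun ρ0 xx = liftFun φ0 xx * liftFun φhat0 xx) ∧
    (∀ yy ∈ ⋃ j, (AT j) ×ˢ Iseg (j : ℕ),
      liftFun ρT yy = liftFun φT yy * liftFun φhatT yy) := by
  -- if a point is outside the union, the lift of a supported function vanishes there
  have lift_zero : ∀ (h : Euc d → Fin N → ℝ≥0∞) (A : Fin N → Set (Euc d)),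
      (∀ j y, y ∉ A j → h y j = 0) →
      ∀ yy : Euc d × ℝ, yy ∉ (⋃ j, (A j) ×ˢ Iseg (j : ℕ)) → liftFun h yy = 0 := by
    intro h A hsupp yy hyy
    refine Finset.sum_eq_zero fun j _ => ?_
    by_cases ht : yy.2 ∈ Iseg (j : ℕ)
    · rw [Set.indicator_of_mem ht]
      refine hsupp j yy.1 fun hy => hyy ?_
      exact Set.mem_iUnion.mpr ⟨j, ⟨hy, ht⟩⟩
    · exact Set.indicator_of_notMem ht _
  refine ⟨?_, ?_, ?_, ?_⟩
  · -- first integral equation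
    intro xx hxx
    obtain ⟨i, hx1, hx2⟩ := by simpa [Set.mem_iUnion, Set.mem_prod] using hxx
    have hsupp : Function.support (fun yy => liftKer p xx yy * liftFun φT yy)
        ⊆ ⋃ j, (AT j) ×ˢ Iseg (j : ℕ) := by
      intro yy hyy
      by_contra h
      have := lift_zero φT AT hφT_supp yy h
      simp [Function.mem_support, this] at hyy
    rw [MeasureTheory.setLIntegral_eq_of_support_subset hsupp]
    have heq : (fun yy => liftKer p xx yy * liftFun φT yy)
        = fun yy : Euc d × ℝ => ∑ j : Fin N,
            Set.indicator (Iseg (j : ℕ)) (fun _ => p i j xx.1 yy.1 * φT yy.1 j) yy.2 := by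
      funext yy
      rw [liftKer_eval_left p hx2, liftFun, sum_indicator_mul]
    have hm : ∀ j : Fin N, Measurable fun y : Euc d => p i j xx.1 y * φT y j := fun j =>
      ((hp_meas i j).comp measurable_prodMk_left).mul (hφT_meas j)
    rw [heq, lintegral_sum_indicator _ hm]
    rw [liftFun_eval φ0 hx2, h1 xx.1 i]
  · -- second integral equation
    intro yy hyy
    obtain ⟨j, hy1, hy2⟩ := by simpa [Set.mem_iUnion, Set.mem_prod] using hyy
    have hsupp : Function.support (fun xx => liftKer p xx yy * liftFun φhat0 xx)
        ⊆ ⋃ i, (A0 i) ×ˢ Iseg (i : ℕ) := by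
      intro xx hxx
      by_contra h
      have := lift_zero φhat0 A0 hφhat0_supp xx h
      simp [Function.mem_support, this] at hxx
    rw [MeasureTheory.setLIntegral_eq_of_support_subset hsupp]
    have heq : (fun xx => liftKer p xx yy * liftFun φhat0 xx)
        = fun xx : Euc d × ℝ => ∑ i : Fin N,
            Set.indicator (Iseg (i : ℕ)) (fun _ => p i j xx.1 yy.1 * φhat0 xx.1 i) xx.2 := by
      funext xx
      rw [liftKer_eval_right p xx hy2, liftFun, sum_indicator_mul]
    have hm : ∀ i : Fin N, Measurable fun x : Euc d => p i j x yy.1 * φhat0 x i := fun i =>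
      ((hp_meas i j).comp (measurable_id.prodMk measurable_const)).mul (hφhat0_meas i)
    rw [heq, lintegral_sum_indicator _ hm]
    rw [liftFun_eval φhatT hy2, h2 yy.1 j]
  · intro xx hxx
    obtain ⟨i, _, hx2⟩ := by simpa [Set.mem_iUnion, Set.mem_prod] using hxx
    rw [liftFun_eval ρ0 hx2, liftFun_eval φ0 hx2, liftFun_eval φhat0 hx2, h3]
  · intro yy hyy
    obtain ⟨j, _, hy2⟩ := by simpa [Set.mem_iUnion, Set.mem_prod] using hyy
    rw [liftFun_eval ρT hy2, liftFun_eval φT hy2, liftFun_eval φhatT hy2, h4]
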